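/- The graph H = K₅ × K_{9:2} (categorical product) has clique number 4 and chromatic number 5. -/

import Mathlib

/-- The Kneser graph `K_{n:k}`: vertices are the `k`-element subsets of an `n`-set,
adjacent iff disjoint. -/
def kneserGraph (n k : ℕ) : SimpleGraph {s : Finset (Fin n) // s.card = k} where
  Adj s t := s ≠ t ∧ Disjoint s.1 t.1
  symm := ⟨fun _ _ h => ⟨h.1.symm, h.2.symm⟩⟩
  loopless := ⟨fun _ h => h.1 rfl⟩

/-- The categorical (tensor) product of two simple graphs. -/
def catProd {α β : Type*} (G₁ : SimpleGraph α) (G₂ : SimpleGraph β) :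
    SimpleGraph (α × β) where
  Adj p q := G₁.Adj p.1 q.1 ∧ G₂.Adj p.2 q.2
  symm := ⟨fun _ _ h => ⟨h.1.symm, h.2.symm⟩⟩
  loopless := ⟨fun p h => G₁.loopless.irrefl p.1 h.1⟩

/-
H = K₅ × K_{9:2} contains the 4-clique (i, {2i, 2i+1}), i < 4, and no larger one, since a clique
of H projects injectively onto a clique of K_{9:2}, i.e. onto pairwise disjoint pairs in a 9-set.
Projecting onto K₅ colours H with 5 colours. Conversely H contains C₅ ∨ K₂: two adjacent vertices
joined to every vertex of a pentagon. In a 4-colouring the pentagon would only see the two colours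
left over by the K₂, impossible for an odd cycle.
-/

open SimpleGraph

theorem Fin.eq_of_avoid_pair (p q x y z : Fin 4) (hpq : p ≠ q) (hxp : x ≠ p) (hxq : x ≠ q)
    (hyp : y ≠ p) (hyq : y ≠ q) (hzp : z ≠ p) (hzq : z ≠ q) (hxy : x ≠ y) (hyz : y ≠ z) :
    x = z := by
  omega

namespace SimpleGraph

variable {α β : Type*} {G : SimpleGraph α} {H : SimpleGraph β}

theorem CliqueFree.of_hom {n : ℕ} (f : G →g H) (h : H.CliqueFree n) : G.CliqueFree n := by
  contrapose h
  rw [not_cliqueFree_iff_top_isContained] at h ⊢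
  obtain ⟨c⟩ := h
  exact ⟨⟨f.comp c.toHom, Hom.injective_of_top_hom _⟩⟩

theorem cliqueNum_eq_of_isNClique_of_cliqueFree [Finite α] {n : ℕ} {s : Finset α}
    (hs : G.IsNClique n s) (hfree : G.CliqueFree (n + 1)) : G.cliqueNum = n := by
  apply le_antisymm
  · by_contra! hlt
    obtain ⟨t, ht⟩ := G.exists_isNClique_cliqueNum
    exact hfree.mono hlt t ht
  · exact hs.card_eq ▸ IsClique.card_le_cliqueNum (tc := hs.isClique)

theorem not_colorable_four_of_join_pentagon {a b : α} {c : Fin 5 → α} (hab : G.Adj a b)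
    (ha : ∀ i, G.Adj a (c i)) (hb : ∀ i, G.Adj b (c i)) (hc : ∀ i, G.Adj (c i) (c (i + 1))) :
    ¬ G.Colorable 4 := by
  rintro ⟨C⟩
  have period_two : ∀ i, C (c i) = C (c (i + 1 + 1)) := fun i =>
    Fin.eq_of_avoid_pair _ _ _ _ _ (C.valid hab)
      (C.valid (ha _)).symm (C.valid (hb _)).symm (C.valid (ha _)).symm (C.valid (hb _)).symm
      (C.valid (ha _)).symm (C.valid (hb _)).symm (C.valid (hc _)) (C.valid (hc _))
  exact C.valid (hc 4) ((period_two 0).trans (period_two 2)).symm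

end SimpleGraph

namespace catProd

variable {α β : Type*} (G₁ : SimpleGraph α) (G₂ : SimpleGraph β)

def fst : catProd G₁ G₂ →g G₁ := ⟨Prod.fst, And.left⟩

def snd : catProd G₁ G₂ →g G₂ := ⟨Prod.snd, And.right⟩

instance [DecidableRel G₁.Adj] [DecidableRel G₂.Adj] : DecidableRel (catProd G₁ G₂).Adj :=
  fun _ _ => inferInstanceAs (Decidable (_ ∧ _))

end catProd

namespace kneserGraph

instance (n k : ℕ) : DecidableRel (kneserGraph n k).Adj :=
  fun _ _ => inferInstanceAs (Decidable (_ ∧ _))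

theorem cliqueFree_of_lt_mul {n k m : ℕ} (h : n < m * k) : (kneserGraph n k).CliqueFree m := by
  intro s hs
  have hdisj : (s : Set _).PairwiseDisjoint Subtype.val :=
    fun _ hv _ hw hvw => (hs.isClique hv hw hvw).2
  have hcard : (s.biUnion Subtype.val).card = m * k := by
    rw [Finset.card_biUnion hdisj, Finset.sum_congr rfl fun v _ => v.2, Finset.sum_const,
      hs.card_eq, smul_eq_mul]
  have := (s.biUnion Subtype.val).card_le_univ
  rw [hcard, Fintype.card_fin] at this
  omega

end kneserGraph

/-- The graph `H = K₅ × K_{9:2}` has clique number 4 and chromatic number 5. -/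
theorem cliqueNum_and_chromaticNumber_K5_prod_kneser :
    (catProd (SimpleGraph.completeGraph (Fin 5)) (kneserGraph 9 2)).cliqueNum = 4 ∧
    (catProd (SimpleGraph.completeGraph (Fin 5)) (kneserGraph 9 2)).chromaticNumber = 5 := by
  have hclique : (catProd (completeGraph (Fin 5)) (kneserGraph 9 2)).IsNClique 4
      {(0, ⟨{0, 1}, rfl⟩), (1, ⟨{2, 3}, rfl⟩), (2, ⟨{4, 5}, rfl⟩), (3, ⟨{6, 7}, rfl⟩)} := by
    decide
  have hfree : (kneserGraph 9 2).CliqueFree 5 := kneserGraph.cliqueFree_of_lt_mul (by norm_num)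
  refine ⟨cliqueNum_eq_of_isNClique_of_cliqueFree hclique (hfree.of_hom (catProd.snd _ _)), ?_⟩
  have h5 : (catProd (completeGraph (Fin 5)) (kneserGraph 9 2)).Colorable 5 := by
    simpa using (completeGraph (Fin 5)).colorable_of_fintype.of_hom (catProd.fst _ _)
  have h4 : ¬ (catProd (completeGraph (Fin 5)) (kneserGraph 9 2)).Colorable 4 :=
    not_colorable_four_of_join_pentagon (a := (0, ⟨{5, 6}, rfl⟩)) (b := (1, ⟨{7, 8}, rfl⟩))
      (c := ![(2, ⟨{0, 1}, rfl⟩), (3, ⟨{2, 3}, rfl⟩), (2, ⟨{0, 4}, rfl⟩), (3, ⟨{1, 2}, rfl⟩),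
        (4, ⟨{3, 4}, rfl⟩)]) (by decide) (by decide) (by decide) (by decide)
  exact chromaticNumber_eq_iff_colorable_not_colorable.2 ⟨h5, h4⟩
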